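/- arXiv:1910.12233 — 5 statements merged into one kernel-verified Lean document; each statement's English description precedes it below -/
import Mathlib

section
/- For a finite simple connected graph G, the constant Q := max over edges {v,w} of (1/deg(v) + 1/deg(w)) satisfies Q ≤ λ_max, where λ_max is the largest eigenvalue of the normalized Laplacian L = I - D^{-1}A. -/
/-!
Let `vw` be an edge realising `Q` and `D` the degree matrix. Since `D L = D - A` is symmetric,
`L` is self-adjoint for the degree-weighted inner product, so `⟨f, D L f⟩ ≤ λ_max ⟨f, D f⟩`.
For `f = e_v / d_v - e_w / d_w` we get `⟨f, D f⟩ = 1/d_v + 1/d_w = Q`, while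
`⟨f, D L f⟩ = ∑_{edges ij} (f_i - f_j)² ≥ (f_v - f_w)² = Q²`. Hence `Q² ≤ λ_max Q`.
-/

/-- The normalized Laplacian `L = I - D⁻¹ A` of a graph, as a real matrix. -/
noncomputable def normLap {V : Type*} [Fintype V] [DecidableEq V] (G : SimpleGraph V)
    [DecidableRel G.Adj] : Matrix V V ℝ :=
  1 - Matrix.of (fun v w => if G.Adj v w then 1 / (G.degree v : ℝ) else 0)

open Matrix

section

variable {n : Type*} [Fintype n] [DecidableEq n]

theorem Matrix.IsHermitian.dotProduct_mulVec_le {S : Matrix n n ℝ} (hS : S.IsHermitian) {c : ℝ}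
    (hc : ∀ (μ : ℝ) (g : n → ℝ), g ≠ 0 → S *ᵥ g = μ • g → μ ≤ c) (g : n → ℝ) :
    g ⬝ᵥ S *ᵥ g ≤ c * (g ⬝ᵥ g) := by
  have hM : (c • 1 - S).IsHermitian := (isHermitian_one.smul (IsSelfAdjoint.all c)).sub hS
  have hpsd : (c • 1 - S).PosSemidef := by
    refine hM.posSemidef_iff_eigenvalues_nonneg.mpr fun i => ?_
    have hb := hM.mulVec_eigenvectorBasis i
    rw [sub_mulVec, smul_mulVec, one_mulVec] at hb
    have := hc (c - hM.eigenvalues i) _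
      ((WithLp.ofLp_eq_zero (p := 2)).not.mpr (hM.eigenvectorBasis.orthonormal.ne_zero i))
      (by rw [sub_smul, ← hb]; abel)
    exact sub_nonneg.mp (by simpa using this)
  simpa only [star_trivial, sub_mulVec, smul_mulVec, one_mulVec, dotProduct_sub,
    dotProduct_smul, smul_eq_mul, sub_nonneg] using hpsd.dotProduct_mulVec_nonneg g

theorem dotProduct_diagonal_mul_mulVec_le {L : Matrix n n ℝ} {d : n → ℝ}
    (hd : ∀ i, 0 < d i) (hL : (diagonal d * L).IsHermitian) {c : ℝ}
    (hc : ∀ (μ : ℝ) (f : n → ℝ), f ≠ 0 → L *ᵥ f = μ • f → μ ≤ c) (f : n → ℝ) :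
    f ⬝ᵥ (diagonal d * L) *ᵥ f ≤ c * (f ⬝ᵥ diagonal d *ᵥ f) := by
  set s : n → ℝ := fun i => √(d i)
  have hs (i : n) : s i ≠ 0 := (Real.sqrt_pos.mpr (hd i)).ne'
  have hss (i : n) : s i * s i = d i := Real.mul_self_sqrt (hd i).le
  -- Conjugating by `P = D^{-1/2}` makes `D L` symmetric; eigenvectors `g` of the result
  -- give eigenvectors `P g` of `L`.
  set P := diagonal s⁻¹
  have hS : (P * (diagonal d * L) * P).IsHermitian := by
    simpa [P] using isHermitian_conjTranspose_mul_mul P hL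
  have hSc (μ : ℝ) (g : n → ℝ) (hg : g ≠ 0) (hSg : (P * (diagonal d * L) * P) *ᵥ g = μ • g) :
      μ ≤ c := by
    refine hc μ (P *ᵥ g) (fun h => hg (funext fun i => ?_)) (funext fun i => ?_)
    · simpa [P, mulVec_diagonal, hs i] using congrFun h i
    · have := congrFun hSg i
      simp only [P, ← mulVec_mulVec, mulVec_diagonal, Pi.inv_apply, Pi.smul_apply,
        smul_eq_mul] at this ⊢
      rw [← hss i, mul_assoc, inv_mul_cancel_left₀ (hs i)] at this
      rw [mul_left_comm, ← this, inv_mul_cancel_left₀ (hs i)]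
  have hPs : P *ᵥ diagonal s *ᵥ f = f := by
    simp [P, mulVec_mulVec, diagonal_mul_diagonal, hs]
  calc f ⬝ᵥ (diagonal d * L) *ᵥ f
      = diagonal s *ᵥ f ⬝ᵥ (P * (diagonal d * L) * P) *ᵥ diagonal s *ᵥ f := by
        rw [← mulVec_mulVec _ _ P, hPs, ← mulVec_mulVec _ P, dotProduct_mulVec _ P]
        congr 1
        funext i
        simp [P, vecMul_diagonal, mulVec_diagonal, mul_comm (s i) (f i), hs i]
    _ ≤ c * (diagonal s *ᵥ f ⬝ᵥ diagonal s *ᵥ f) := hS.dotProduct_mulVec_le hSc _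
    _ = c * (f ⬝ᵥ diagonal d *ᵥ f) := by
        simp only [dotProduct, mulVec_diagonal, ← hss]
        congr 1
        exact Finset.sum_congr rfl fun i _ => by ring

theorem single_sub_single_dotProduct_diagonal_mulVec {v w : n} (h : v ≠ w) (d : n → ℝ)
    (a b : ℝ) :
    (Pi.single v a - Pi.single w b) ⬝ᵥ diagonal d *ᵥ (Pi.single v a - Pi.single w b) =
      d v * a ^ 2 + d w * b ^ 2 := by
  rw [dotProduct, Fintype.sum_eq_add v w h]
  · simp only [Pi.sub_apply, Pi.single_eq_same, Pi.single_eq_of_ne h, Pi.single_eq_of_ne h.symm,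
      mulVec_diagonal, sub_zero, zero_sub]
    ring
  · rintro u ⟨hv, hw⟩
    simp [mulVec_diagonal, hv, hw]

end

namespace SimpleGraph

variable {V : Type*} [Fintype V] [DecidableEq V] {G : SimpleGraph V} [DecidableRel G.Adj]

theorem degMatrix_mul_normLap : G.degMatrix ℝ * normLap G = G.lapMatrix ℝ := by
  ext u w
  by_cases h : G.Adj u w
  · have hu : (G.degree u : ℝ) ≠ 0 :=
      Nat.cast_ne_zero.mpr ((G.degree_pos_iff_exists_adj u).mpr ⟨w, h⟩).ne'
    simp [normLap, degMatrix, lapMatrix, h, h.ne, hu]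
  · by_cases huw : u = w
    · subst huw
      simp [normLap, degMatrix, lapMatrix]
    · simp [normLap, degMatrix, lapMatrix, h, huw]

theorem Adj.sq_sub_le_dotProduct_lapMatrix_mulVec {v w : V} (h : G.Adj v w) (f : V → ℝ) :
    (f v - f w) ^ 2 ≤ f ⬝ᵥ G.lapMatrix ℝ *ᵥ f := by
  rw [← toLinearMap₂'_apply', lapMatrix_toLinearMap₂']
  set F : V → V → ℝ := fun i j => if G.Adj i j then (f i - f j) ^ 2 else 0
  have hF (i j : V) : 0 ≤ F i j := by positivity
  calc (f v - f w) ^ 2 = (F v w + F w v) / 2 := by simp [F, h, h.symm]; ring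
    _ ≤ (∑ j, F v j + ∑ j, F w j) / 2 := by
      gcongr <;> exact Finset.single_le_sum (fun j _ => hF _ j) (Finset.mem_univ _)
    _ ≤ (∑ i, ∑ j, F i j) / 2 := by
      gcongr
      exact Finset.add_le_sum (fun i _ => Finset.sum_nonneg fun j _ => hF i j)
        (Finset.mem_univ _) (Finset.mem_univ _) h.ne

end SimpleGraph

theorem stmt0 {V : Type*} [Fintype V] [DecidableEq V] (G : SimpleGraph V)
    [DecidableRel G.Adj] (hconn : G.Connected) (Q lam : ℝ)
    (hQ : IsGreatest {x : ℝ | ∃ v w : V, G.Adj v w ∧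
      x = 1 / (G.degree v : ℝ) + 1 / (G.degree w : ℝ)} Q)
    (hlam : IsGreatest
      {μ : ℝ | ∃ f : V → ℝ, f ≠ 0 ∧ (normLap G).mulVec f = μ • f} lam) :
    Q ≤ lam := by
  obtain ⟨v, w, hvw, rfl⟩ := hQ.1
  have : Nontrivial V := nontrivial_of_ne v w hvw.ne
  set d : V → ℝ := fun u => G.degree u
  have hd (u : V) : 0 < d u := Nat.cast_pos.mpr (hconn.preconnected.degree_pos_of_nontrivial u)
  set f : V → ℝ := Pi.single v (1 / d v) - Pi.single w (1 / d w)
  have hdiff : f v - f w = 1 / d v + 1 / d w := by simp [f, hvw.ne, hvw.ne']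
  have hnorm : f ⬝ᵥ diagonal d *ᵥ f = 1 / d v + 1 / d w := by
    rw [single_sub_single_dotProduct_diagonal_mulVec hvw.ne]
    field_simp [(hd v).ne', (hd w).ne']
  have hL : (diagonal d * normLap G).IsHermitian :=
    SimpleGraph.degMatrix_mul_normLap (G := G) ▸ G.isHermitian_lapMatrix ℝ
  have hpos : 0 < 1 / d v + 1 / d w := by have := hd v; have := hd w; positivity
  refine le_of_mul_le_mul_right ?_ hpos
  calc (1 / d v + 1 / d w) * (1 / d v + 1 / d w)
      = (f v - f w) ^ 2 := by rw [hdiff, sq]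
    _ ≤ f ⬝ᵥ G.lapMatrix ℝ *ᵥ f := hvw.sq_sub_le_dotProduct_lapMatrix_mulVec f
    _ = f ⬝ᵥ (diagonal d * normLap G) *ᵥ f := by rw [← SimpleGraph.degMatrix_mul_normLap]; rfl
    _ ≤ lam * (f ⬝ᵥ diagonal d *ᵥ f) :=
      dotProduct_diagonal_mul_mulVec_le hd hL (fun μ g hg hμ => hlam.2 ⟨g, hg, hμ⟩) f
    _ = lam * (1 / d v + 1 / d w) := by rw [hnorm]
end

section
/- For a finite simple graph, Q equals the maximum over nonzero functions γ : E → ℝ of the quotient (∑_{v∈V} (1/deg v)·|∑_{e: v is input of e} γ(e) − ∑_{e: v is output of e} γ(e)|) / (∑_{e∈E} |γ(e)|), where Q := max over edges {v,w} of (1/deg(v) + 1/deg(w)). -/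
/-!
Write `w v = 1 / deg v`. Since the two endpoints of an edge are distinct, a flow `γ` concentrated
on a single edge `e = (a, b)` has divergence `±γ e` at `a` and `b` and `0` elsewhere, so its
quotient is exactly `w a + w b`. Conversely, the triangle inequality and an exchange of sums bound
`∑ v, w v * |div γ v|` by `∑ e, (w a_e + w b_e) * |γ e| ≤ Q * ∑ e, |γ e|`.
-/

open Finset

section Divergence

variable {V E : Type*} [DecidableEq V]

def divergence (s : Finset E) (o : E → V × V) (γ : E → ℝ) (v : V) : ℝ :=
  ∑ e ∈ s, ((if (o e).1 = v then γ e else 0) - (if (o e).2 = v then γ e else 0))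

lemma sum_mul_abs_ite_sub_ite [Fintype V] {a b : V} (hab : a ≠ b) (w : V → ℝ) (c : ℝ) :
    ∑ v, w v * |(if a = v then c else 0) - (if b = v then c else 0)| = (w a + w b) * |c| := by
  have hsplit : ∀ v, |(if a = v then c else 0) - (if b = v then c else 0)| =
      (if a = v then |c| else 0) + (if b = v then |c| else 0) := by
    intro v
    by_cases ha : a = v <;> by_cases hb : b = v
    · exact absurd (ha.trans hb.symm) hab
    all_goals simp [ha, hb]
  simp only [hsplit, mul_add, mul_ite, mul_zero, sum_add_distrib, sum_ite_eq, mem_univ, if_true]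
  ring

lemma sum_mul_abs_divergence_le [Fintype V] {s : Finset E} {o : E → V × V}
    (hne : ∀ e ∈ s, (o e).1 ≠ (o e).2) {w : V → ℝ} (hw : ∀ v, 0 ≤ w v) (γ : E → ℝ) :
    ∑ v, w v * |divergence s o γ v| ≤ ∑ e ∈ s, (w (o e).1 + w (o e).2) * |γ e| :=
  calc ∑ v, w v * |divergence s o γ v|
      ≤ ∑ v, ∑ e ∈ s,
          w v * |(if (o e).1 = v then γ e else 0) - (if (o e).2 = v then γ e else 0)| :=
        sum_le_sum fun v _ => by
          rw [← mul_sum]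
          exact mul_le_mul_of_nonneg_left (abs_sum_le_sum_abs _ _) (hw v)
    _ = ∑ e ∈ s, ∑ v,
          w v * |(if (o e).1 = v then γ e else 0) - (if (o e).2 = v then γ e else 0)| :=
        sum_comm
    _ = ∑ e ∈ s, (w (o e).1 + w (o e).2) * |γ e| :=
        sum_congr rfl fun e he => sum_mul_abs_ite_sub_ite (hne e he) w (γ e)

lemma divergence_eq_of_forall_ne {s : Finset E} {e₀ : E} (he₀ : e₀ ∈ s) (o : E → V × V)
    {γ : E → ℝ} (hγ : ∀ e ∈ s, e ≠ e₀ → γ e = 0) (v : V) :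
    divergence s o γ v =
      (if (o e₀).1 = v then γ e₀ else 0) - (if (o e₀).2 = v then γ e₀ else 0) :=
  sum_eq_single_of_mem e₀ he₀ fun e he hne => by simp [hγ e he hne]

lemma isGreatest_divergence_quotient [Fintype V] {s : Finset E} {o : E → V × V}
    (hne : ∀ e ∈ s, (o e).1 ≠ (o e).2) {w : V → ℝ} (hw : ∀ v, 0 ≤ w v) {Q : ℝ}
    (hQ : IsGreatest ((fun e => w (o e).1 + w (o e).2) '' s) Q) :
    IsGreatest {x : ℝ | ∃ γ : E → ℝ, (∃ e ∈ s, γ e ≠ 0) ∧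
      x = (∑ v, w v * |divergence s o γ v|) / ∑ e ∈ s, |γ e|} Q := by
  obtain ⟨⟨e₀, (he₀ : e₀ ∈ s), rfl⟩, hQ_ub⟩ := hQ
  classical
  constructor
  · refine ⟨fun e => if e = e₀ then 1 else 0, ⟨e₀, he₀, by simp⟩, ?_⟩
    have hden : ∑ e ∈ s, |(if e = e₀ then (1 : ℝ) else 0)| = 1 := by
      simp [apply_ite, sum_ite_eq', he₀]
    rw [hden, div_one, sum_congr rfl fun v _ => by
      rw [divergence_eq_of_forall_ne he₀ o (fun e _ h => if_neg h)],
      sum_mul_abs_ite_sub_ite (hne e₀ he₀)]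
    simp
  · rintro x ⟨γ, ⟨e₁, he₁, hγe₁⟩, rfl⟩
    have hpos : 0 < ∑ e ∈ s, |γ e| :=
      sum_pos' (fun e _ => abs_nonneg _) ⟨e₁, he₁, abs_pos.mpr hγe₁⟩
    rw [div_le_iff₀ hpos, mul_sum]
    exact (sum_mul_abs_divergence_le hne hw γ).trans <| sum_le_sum fun e he =>
      mul_le_mul_of_nonneg_right (hQ_ub ⟨e, he, rfl⟩) (abs_nonneg _)

end Divergence

theorem stmt1_general {V : Type*} [Fintype V] [DecidableEq V] (G : SimpleGraph V)
    [DecidableRel G.Adj]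
    -- a fixed orientation: each edge is an ordered pair (input, output)
    (o : Sym2 V → V × V) (ho : ∀ e ∈ G.edgeFinset, s((o e).1, (o e).2) = e)
    (Q : ℝ)
    (hQ : IsGreatest {x : ℝ | ∃ v w : V, G.Adj v w ∧
      x = 1 / (G.degree v : ℝ) + 1 / (G.degree w : ℝ)} Q) :
    IsGreatest {x : ℝ | ∃ γ : Sym2 V → ℝ, (∃ e ∈ G.edgeFinset, γ e ≠ 0) ∧
      x = (∑ v : V, (1 / (G.degree v : ℝ)) *
            |∑ e ∈ G.edgeFinset,
              ((if (o e).1 = v then γ e else 0) - (if (o e).2 = v then γ e else 0))|) /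
          (∑ e ∈ G.edgeFinset, |γ e|)} Q := by
  have hadj : ∀ e ∈ G.edgeFinset, G.Adj (o e).1 (o e).2 := fun e he => by
    rw [← ho e he, SimpleGraph.mem_edgeFinset, SimpleGraph.mem_edgeSet] at he
    exact he
  refine isGreatest_divergence_quotient (fun e he => (hadj e he).ne)
    (fun v => by positivity) ⟨?_, ?_⟩
  · obtain ⟨⟨v, w, hvw, rfl⟩, -⟩ := hQ
    have hmem : s(v, w) ∈ G.edgeFinset := by simpa using hvw
    refine ⟨s(v, w), hmem, ?_⟩
    rcases Sym2.eq_iff.mp (ho _ hmem) with ⟨h₁, h₂⟩ | ⟨h₁, h₂⟩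
    · dsimp only
      rw [h₁, h₂]
    · dsimp only
      rw [h₁, h₂, add_comm]
  · rintro _ ⟨e, he, rfl⟩
    exact hQ.2 ⟨_, _, hadj e he, rfl⟩

theorem stmt1 {V : Type*} [Fintype V] [DecidableEq V] (G : SimpleGraph V)
    [DecidableRel G.Adj] (hiso : ∀ v : V, 0 < G.degree v)
    -- a fixed orientation: each edge is an ordered pair (input, output)
    (o : Sym2 V → V × V) (ho : ∀ e ∈ G.edgeFinset, s((o e).1, (o e).2) = e)
    (Q : ℝ)
    (hQ : IsGreatest {x : ℝ | ∃ v w : V, G.Adj v w ∧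
      x = 1 / (G.degree v : ℝ) + 1 / (G.degree w : ℝ)} Q) :
    IsGreatest {x : ℝ | ∃ γ : Sym2 V → ℝ, (∃ e ∈ G.edgeFinset, γ e ≠ 0) ∧
      x = (∑ v : V, (1 / (G.degree v : ℝ)) *
            |∑ e ∈ G.edgeFinset,
              ((if (o e).1 = v then γ e else 0) - (if (o e).2 = v then γ e else 0))|) /
          (∑ e ∈ G.edgeFinset, |γ e|)} Q :=
  stmt1_general G o ho Q hQ
end

section
/- For a finite simple graph, Q equals the maximum over nonempty bipartite subgraphs Γ̂ ⊆ Γ of (∑_{v∈V} deg_{Γ̂}(v)/deg_Γ(v)) / |E(Γ̂)|, where Q := max over edges {v,w} of (1/deg(v) + 1/deg(w)). -/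
/-!
Double counting gives `∑ v, deg_F v / deg v = ∑_{e ∈ F} ∑_{v ∈ e} 1 / deg v`, so the ratio
is an average over the edges of `F` of `1 / deg v + 1 / deg w`, hence at most `Q`; a single
edge attaining `Q` is a bipartite subgraph realising it.
-/

open Finset

section

variable {V : Type*} [Fintype V] [DecidableEq V]

lemma sum_filter_mem_sym2_mk {M : Type*} [AddCommMonoid M] (f : V → M) {a b : V} (hab : a ≠ b) :
    ∑ v with v ∈ s(a, b), f v = f a + f b := by
  have : ({v | v ∈ s(a, b)} : Finset V) = {a, b} := by ext; simp
  rw [this, sum_pair hab]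

lemma sum_card_filter_mem_div_eq (F : Finset (Sym2 V)) (d : V → ℝ) :
    ∑ v, (#(F.filter (fun e => v ∈ e)) : ℝ) / d v =
      ∑ e ∈ F, ∑ v with v ∈ e, 1 / d v := by
  simp_rw [sum_filter, card_filter, Nat.cast_sum, sum_div, Nat.cast_ite, ite_div,
    Nat.cast_one, Nat.cast_zero, zero_div]
  exact sum_comm

end

theorem stmt2_general {V : Type*} [Fintype V] [DecidableEq V] (G : SimpleGraph V)
    [DecidableRel G.Adj]
    (Q : ℝ)
    (hQ : IsGreatest {x : ℝ | ∃ v w : V, G.Adj v w ∧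
      x = 1 / (G.degree v : ℝ) + 1 / (G.degree w : ℝ)} Q) :
    IsGreatest {x : ℝ | ∃ F : Finset (Sym2 V), F ⊆ G.edgeFinset ∧ F.Nonempty ∧
      (∃ c : V → Bool, ∀ e ∈ F, ∀ v w : V, e = s(v, w) → c v ≠ c w) ∧
      x = (∑ v : V, ((F.filter (fun e => v ∈ e)).card : ℝ) / (G.degree v : ℝ)) /
          (F.card : ℝ)} Q := by
  obtain ⟨⟨v, w, hvw, hQ_eq⟩, hQ_ub⟩ := hQ
  refine ⟨⟨{s(v, w)}, by simpa using hvw, singleton_nonempty _,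
    ⟨fun u => decide (u = w), ?_⟩, ?_⟩, ?_⟩
  · rintro e he a b rfl
    obtain ⟨rfl, rfl⟩ | ⟨rfl, rfl⟩ := Sym2.eq_iff.mp (mem_singleton.mp he) <;>
      simp [hvw.ne]
  · rw [sum_card_filter_mem_div_eq, sum_singleton, sum_filter_mem_sym2_mk _ hvw.ne]
    simp [hQ_eq]
  · rintro _ ⟨F, hFG, hF, -, rfl⟩
    have h_edge : ∀ e ∈ F, ∑ u with u ∈ e, 1 / (G.degree u : ℝ) ≤ Q := by
      intro e he
      induction e using Sym2.ind with
      | _ a b =>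
        have hab : G.Adj a b := by simpa using hFG he
        rw [sum_filter_mem_sym2_mk _ hab.ne]
        exact hQ_ub ⟨a, b, hab, rfl⟩
    rw [sum_card_filter_mem_div_eq, ← expect_eq_sum_div_card]
    exact expect_le hF h_edge

theorem stmt2 {V : Type*} [Fintype V] [DecidableEq V] (G : SimpleGraph V)
    [DecidableRel G.Adj] (hiso : ∀ v : V, 0 < G.degree v)
    (Q : ℝ)
    (hQ : IsGreatest {x : ℝ | ∃ v w : V, G.Adj v w ∧
      x = 1 / (G.degree v : ℝ) + 1 / (G.degree w : ℝ)} Q) :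
    IsGreatest {x : ℝ | ∃ F : Finset (Sym2 V), F ⊆ G.edgeFinset ∧ F.Nonempty ∧
      (∃ c : V → Bool, ∀ e ∈ F, ∀ v w : V, e = s(v, w) → c v ≠ c w) ∧
      x = (∑ v : V, ((F.filter (fun e => v ∈ e)).card : ℝ) / (G.degree v : ℝ)) /
          (F.card : ℝ)} Q :=
  stmt2_general G Q hQ
end

section
/- For every finite simple graph on n vertices with largest normalized Laplacian eigenvalue λ_max, we have λ_max ≤ Q · τ, where Q := max over edges {v,w} of (1/deg(v)+1/deg(w)) and τ := max over edges {v,w} with deg(w) ≥ deg(v) of ((deg(w) − deg(v) + n)·deg(v))/(deg(v)+deg(w)). -/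
/-!
Let `f` be an eigenvector for `λ > 1`, normalised so that `f v = max |f| > 0`, and let `w` be
the neighbour of `v` where `f` is smallest. The eigenvalue equations at `v` and `w` express the
termwise nonnegative sums `∑_{N(v)} (f - f w)` and `∑_{N(w)} (f v - f)` as `deg v · A` and
`deg w · B`, with `A + B = (2 - λ)(f v - f w)`. Restricting both sums to the common
neighbourhood gives `|N(v) ∩ N(w)| ≤ (2 - λ) max(deg v, deg w)`, and inclusion–exclusion
`|N(v) ∩ N(w)| ≥ deg v + deg w - n` turns this into `λ ≤ (n - deg v + deg w) / deg w` when
`deg v ≤ deg w`, which factors as `(1/deg v + 1/deg w) · τ(v, w)`. For `λ ≤ 1` any edge does,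
since `|N(v) ∩ N(w)| ≤ deg v`.
-/

open Finset

namespace SimpleGraph

variable {V : Type*} [Fintype V] [DecidableEq V] (G : SimpleGraph V) [DecidableRel G.Adj]

theorem normLap_mulVec_apply (f : V → ℝ) (x : V) :
    (normLap G).mulVec f x = f x - (∑ u ∈ G.neighborFinset x, f u) / G.degree x := by
  simp only [normLap, Matrix.mulVec, dotProduct, Matrix.sub_apply, Matrix.one_apply,
    Matrix.of_apply, sub_mul, sum_sub_distrib, ite_mul, one_mul, zero_mul, sum_ite_eq,
    mem_univ, if_true, neighborFinset_eq_filter, sum_filter, sum_div]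
  congr 1
  refine sum_congr rfl fun u _ => ?_
  split_ifs <;> simp [div_eq_mul_inv, mul_comm]

variable {G}

theorem sum_neighborFinset_eq_of_normLap_mulVec {lam : ℝ} {f : V → ℝ}
    (hf : (normLap G).mulVec f = lam • f) {x : V} (hx : 0 < G.degree x) :
    ∑ u ∈ G.neighborFinset x, f u = (1 - lam) * G.degree x * f x := by
  have h := congr_fun hf x
  rw [normLap_mulVec_apply, Pi.smul_apply, smul_eq_mul] at h
  have hx' : (G.degree x : ℝ) ≠ 0 := by positivity
  field_simp at h
  linarith

theorem degree_add_degree_le_card_add_card_inter (v w : V) :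
    G.degree v + G.degree w ≤ Fintype.card V + #(G.neighborFinset v ∩ G.neighborFinset w) := by
  rw [← card_neighborFinset_eq_degree, ← card_neighborFinset_eq_degree,
    ← card_union_add_card_inter]
  exact Nat.add_le_add_right (card_le_univ _) _

theorem exists_adj_mul_max_degree_add_card_inter_le_of_abs_le (hdeg : ∀ x, 0 < G.degree x)
    {lam : ℝ} {f : V → ℝ} (hf : (normLap G).mulVec f = lam • f) (hlam : 1 < lam) {v : V}
    (hpos : 0 < f v) (hmax : ∀ u, |f u| ≤ f v) :
    ∃ w, G.Adj v w ∧ lam * max (G.degree v : ℝ) (G.degree w) +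
      #(G.neighborFinset v ∩ G.neighborFinset w) ≤ 2 * max (G.degree v : ℝ) (G.degree w) := by
  have hvN : (G.neighborFinset v).Nonempty := by
    rw [← card_pos, card_neighborFinset_eq_degree]; exact hdeg v
  obtain ⟨w, hw, hwmin⟩ := exists_min_image (G.neighborFinset v) f hvN
  refine ⟨w, (mem_neighborFinset G v w).1 hw, ?_⟩
  set M := f v
  set m := -f w
  set S := G.neighborFinset v ∩ G.neighborFinset w
  set A := m - (lam - 1) * M
  set B := M - (lam - 1) * m
  have hsum_v : ∑ u ∈ G.neighborFinset v, (f u - f w) = G.degree v * A := by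
    rw [sum_sub_distrib, sum_neighborFinset_eq_of_normLap_mulVec hf (hdeg v), sum_const,
      card_neighborFinset_eq_degree, nsmul_eq_mul]
    ring
  have hsum_w : ∑ u ∈ G.neighborFinset w, (M - f u) = G.degree w * B := by
    rw [sum_sub_distrib, sum_neighborFinset_eq_of_normLap_mulVec hf (hdeg w), sum_const,
      card_neighborFinset_eq_degree, nsmul_eq_mul]
    ring
  have hnonneg_v : ∀ u ∈ G.neighborFinset v, 0 ≤ f u - f w :=
    fun u hu => sub_nonneg.2 (hwmin u hu)
  have hnonneg_w : ∀ u ∈ G.neighborFinset w, 0 ≤ M - f u :=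
    fun u _ => sub_nonneg.2 ((le_abs_self _).trans (hmax u))
  have hdv : (0 : ℝ) < G.degree v := by exact_mod_cast hdeg v
  have hdw : (0 : ℝ) < G.degree w := by exact_mod_cast hdeg w
  have hA : 0 ≤ A := nonneg_of_mul_nonneg_right (hsum_v ▸ sum_nonneg hnonneg_v) hdv
  have hB : 0 ≤ B := nonneg_of_mul_nonneg_right (hsum_w ▸ sum_nonneg hnonneg_w) hdw
  have hMm : 0 < M + m := by nlinarith
  have hcommon : #S * (M + m) ≤ G.degree v * A + G.degree w * B := by
    have hS : ∑ u ∈ S, ((f u - f w) + (M - f u)) = #S * (M + m) := by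
      rw [sum_congr rfl fun u _ => (by ring : (f u - f w) + (M - f u) = M + m), sum_const,
        nsmul_eq_mul]
    rw [← hS, sum_add_distrib, ← hsum_v, ← hsum_w]
    exact add_le_add
      (sum_le_sum_of_subset_of_nonneg inter_subset_left fun u hu _ => hnonneg_v u hu)
      (sum_le_sum_of_subset_of_nonneg inter_subset_right fun u hu _ => hnonneg_w u hu)
  have hmaxdeg : G.degree v * A + G.degree w * B ≤
      max (G.degree v : ℝ) (G.degree w) * ((2 - lam) * (M + m)) := by
    have : (2 - lam) * (M + m) = A + B := by ring
    rw [this, mul_add]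
    exact add_le_add (mul_le_mul_of_nonneg_right (le_max_left _ _) hA)
      (mul_le_mul_of_nonneg_right (le_max_right _ _) hB)
  have : (#S : ℝ) ≤ max (G.degree v : ℝ) (G.degree w) * (2 - lam) :=
    le_of_mul_le_mul_right (by linarith) hMm
  linarith

theorem exists_adj_mul_max_degree_add_card_inter_le (hdeg : ∀ x, 0 < G.degree x) {lam : ℝ}
    {f : V → ℝ} (hf0 : f ≠ 0) (hf : (normLap G).mulVec f = lam • f) :
    ∃ v w, G.Adj v w ∧ lam * max (G.degree v : ℝ) (G.degree w) +
      #(G.neighborFinset v ∩ G.neighborFinset w) ≤ 2 * max (G.degree v : ℝ) (G.degree w) := by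
  obtain ⟨u₀, hu₀⟩ := Function.ne_iff.1 hf0
  obtain ⟨v, -, hv⟩ := exists_max_image univ (fun u => |f u|) ⟨u₀, mem_univ u₀⟩
  have hfv : f v ≠ 0 := abs_pos.1 <| (abs_pos.2 hu₀).trans_le (hv u₀ (mem_univ u₀))
  rcases le_or_gt lam 1 with hlam | hlam
  · have hvN : (G.neighborFinset v).Nonempty := by
      rw [← card_pos, card_neighborFinset_eq_degree]; exact hdeg v
    obtain ⟨w, hw⟩ := hvN
    refine ⟨v, w, (mem_neighborFinset G v w).1 hw, ?_⟩
    have hS : (#(G.neighborFinset v ∩ G.neighborFinset w) : ℝ) ≤ G.degree v := by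
      rw [← card_neighborFinset_eq_degree]; exact_mod_cast card_le_card inter_subset_left
    have hmax : 0 ≤ max (G.degree v : ℝ) (G.degree w) := le_max_of_le_left (Nat.cast_nonneg _)
    nlinarith [le_max_left (G.degree v : ℝ) (G.degree w)]
  · obtain ⟨g, hg, hgv, hgmax⟩ : ∃ g : V → ℝ, (normLap G).mulVec g = lam • g ∧ 0 < g v ∧
        ∀ u, |g u| ≤ g v := by
      rcases hfv.lt_or_gt with hneg | hpos
      · refine ⟨-f, by rw [Matrix.mulVec_neg, hf, smul_neg], neg_pos.2 hneg, fun u => ?_⟩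
        rw [Pi.neg_apply, Pi.neg_apply, abs_neg, ← abs_of_neg hneg]
        exact hv u (mem_univ u)
      · exact ⟨f, hf, hpos, fun u => abs_of_pos hpos ▸ hv u (mem_univ u)⟩
    obtain ⟨w, hvw, h⟩ :=
      exists_adj_mul_max_degree_add_card_inter_le_of_abs_le hdeg hg hlam hgv hgmax
    exact ⟨v, w, hvw, h⟩

theorem exists_adj_degree_le_and_mul_degree_le (hdeg : ∀ x, 0 < G.degree x) {lam : ℝ}
    {f : V → ℝ} (hf0 : f ≠ 0) (hf : (normLap G).mulVec f = lam • f) :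
    ∃ a b, G.Adj a b ∧ G.degree a ≤ G.degree b ∧
      lam * G.degree b ≤ Fintype.card V - G.degree a + G.degree b := by
  obtain ⟨v, w, hvw, h⟩ := exists_adj_mul_max_degree_add_card_inter_le hdeg hf0 hf
  have hcard : (G.degree v + G.degree w : ℝ) ≤
      Fintype.card V + #(G.neighborFinset v ∩ G.neighborFinset w) := by
    exact_mod_cast degree_add_degree_le_card_add_card_inter v w
  rcases le_total (G.degree v) (G.degree w) with hle | hle
  · refine ⟨v, w, hvw, hle, ?_⟩
    rw [max_eq_right (by exact_mod_cast hle)] at h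
    linarith
  · refine ⟨w, v, hvw.symm, hle, ?_⟩
    rw [max_eq_left (by exact_mod_cast hle)] at h
    linarith

end SimpleGraph

theorem stmt3 {V : Type*} [Fintype V] [DecidableEq V] (G : SimpleGraph V)
    [DecidableRel G.Adj] (hiso : ∀ v : V, 0 < G.degree v)
    (n : ℕ) (hn : n = Fintype.card V) (Q tau lam : ℝ)
    (hQ : IsGreatest {x : ℝ | ∃ v w : V, G.Adj v w ∧
      x = 1 / (G.degree v : ℝ) + 1 / (G.degree w : ℝ)} Q)
    (htau : IsGreatest {x : ℝ | ∃ v w : V, G.Adj v w ∧ G.degree v ≤ G.degree w ∧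
      x = (((G.degree w : ℝ) - (G.degree v : ℝ) + (n : ℝ)) * (G.degree v : ℝ)) /
          ((G.degree v : ℝ) + (G.degree w : ℝ))} tau)
    (hlam : IsGreatest
      {μ : ℝ | ∃ f : V → ℝ, f ≠ 0 ∧ (normLap G).mulVec f = μ • f} lam) :
    lam ≤ Q * tau := by
  obtain ⟨f, hf0, hf⟩ := hlam.1
  obtain ⟨a, b, hab, hle, hlam_le⟩ := G.exists_adj_degree_le_and_mul_degree_le hiso hf0 hf
  subst hn
  have hda : (0 : ℝ) < G.degree a := by exact_mod_cast hiso a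
  have hdb : (0 : ℝ) < G.degree b := by exact_mod_cast hiso b
  have hle' : (G.degree a : ℝ) ≤ G.degree b := by exact_mod_cast hle
  have hQab := hQ.2 ⟨a, b, hab, rfl⟩
  have htau_ab := htau.2 ⟨a, b, hab, hle, rfl⟩
  calc lam ≤ (Fintype.card V - G.degree a + G.degree b) / G.degree b :=
        (le_div_iff₀ hdb).2 hlam_le
    _ = (1 / G.degree a + 1 / G.degree b) * ((G.degree b - G.degree a + Fintype.card V) *
          G.degree a / (G.degree a + G.degree b)) := by
        field_simp
        ring
    _ ≤ Q * tau := mul_le_mul hQab htau_ab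
        (div_nonneg (mul_nonneg (by linarith [(Fintype.card V).cast_nonneg (α := ℝ)]) hda.le)
          (by positivity))
        ((by positivity : (0 : ℝ) ≤ 1 / G.degree a + 1 / G.degree b).trans hQab)
end

section
/- Let Γ be a (k,d)-one-sided bipartite graph on n vertices with d < n−k. Then the largest eigenvalue λ_max of the normalized Laplacian satisfies (d+k)/d ≤ λ_max ≤ n/d. -/
/-- A `(k,d)`-one-sided bipartite graph: the vertex set splits as `V₁ ⊔ V₂` with
`|V₂| = k`, every vertex of `V₁` adjacent to every vertex of `V₂`, no edges inside
`V₂`, and every vertex of `V₁` of degree `d`. -/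
def IsOneSidedBipartite {V : Type*} [Fintype V] [DecidableEq V] (G : SimpleGraph V)
    [DecidableRel G.Adj] (V₁ V₂ : Finset V) (k d : ℕ) : Prop :=
  Disjoint V₁ V₂ ∧ V₁ ∪ V₂ = Finset.univ ∧ V₂.card = k ∧
  (∀ v ∈ V₁, ∀ w ∈ V₂, G.Adj v w) ∧
  (∀ v ∈ V₂, ∀ w ∈ V₂, ¬ G.Adj v w) ∧
  (∀ v ∈ V₁, G.degree v = d)

open Finset Matrix

lemma SimpleGraph.sum_sum_neighborFinset_eq_sum_degree_mul {V : Type*} [Fintype V]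
    (G : SimpleGraph V) [DecidableRel G.Adj] (f : V → ℝ) :
    ∑ v, ∑ w ∈ G.neighborFinset v, f w = ∑ v, G.degree v * f v := by
  have h := dotProduct_mulVec (1 : V → ℝ) (G.adjMatrix ℝ) f
  simpa only [dotProduct, Pi.one_apply, one_mul, adjMatrix_mulVec_apply, adjMatrix_vecMul_apply,
    sum_const, card_neighborFinset_eq_degree, nsmul_eq_mul, mul_one] using h

lemma SimpleGraph.sum_neighborFinset_add_add_sum_compl_neighborFinset {V : Type*} [Fintype V]
    [DecidableEq V] (G : SimpleGraph V) [DecidableRel G.Adj] (f : V → ℝ) (v : V) :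
    ∑ w ∈ G.neighborFinset v, f w + f v + ∑ w ∈ Gᶜ.neighborFinset v, f w = ∑ w, f w := by
  have hv : v ∈ (G.neighborFinset v)ᶜ := by simp
  rw [← sum_add_sum_compl (G.neighborFinset v), G.neighborFinset_compl, sdiff_singleton_eq_erase,
    add_assoc, ← sum_insert (notMem_erase v _), insert_erase hv]

section NormLap

variable {V : Type*} [Fintype V] [DecidableEq V] (G : SimpleGraph V) [DecidableRel G.Adj]

lemma normLap_mulVec_apply (f : V → ℝ) (v : V) :
    (normLap G *ᵥ f) v = f v - (∑ w ∈ G.neighborFinset v, f w) / G.degree v := by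
  rw [normLap, Matrix.sub_mulVec, Pi.sub_apply, Matrix.one_mulVec, ← G.adjMatrix_mulVec_apply,
    Matrix.mulVec, Matrix.mulVec, dotProduct, dotProduct, Finset.sum_div]
  congr 2 with w
  by_cases h : G.Adj v w <;> simp [h, div_eq_inv_mul]

variable {G}

lemma degree_mul_eq_sum_neighborFinset_of_normLap_mulVec_eq {μ : ℝ} {f : V → ℝ}
    (hf : normLap G *ᵥ f = μ • f) (v : V) :
    (1 - μ) * G.degree v * f v = ∑ w ∈ G.neighborFinset v, f w := by
  have hv := congrFun hf v
  rw [normLap_mulVec_apply, Pi.smul_apply, smul_eq_mul] at hv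
  rcases eq_or_ne (G.degree v : ℝ) 0 with h | h
  · have hN : G.neighborFinset v = ∅ :=
      card_eq_zero.mp (by rw [G.card_neighborFinset_eq_degree]; exact_mod_cast h)
    rw [h, hN, sum_empty, mul_zero, zero_mul]
  · field_simp at hv
    linear_combination hv

lemma sum_degree_mul_eq_zero_of_normLap_mulVec_eq {μ : ℝ} {f : V → ℝ}
    (hμ : μ ≠ 0) (hf : normLap G *ᵥ f = μ • f) :
    ∑ v, G.degree v * f v = 0 := by
  have h := G.sum_sum_neighborFinset_eq_sum_degree_mul f
  simp_rw [← degree_mul_eq_sum_neighborFinset_of_normLap_mulVec_eq hf, mul_assoc,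
    ← Finset.mul_sum] at h
  have : μ * ∑ v, G.degree v * f v = 0 := by linear_combination -h
  exact (mul_eq_zero.mp this).resolve_left hμ

lemma eigenvalue_mul_degree_le_card_of_abs_le {μ : ℝ} {f : V → ℝ}
    (hf : normLap G *ᵥ f = μ • f) (hsum : ∑ w, f w = 0) {v : V} (hv : f v ≠ 0)
    (hmax : ∀ w, |f w| ≤ |f v|) :
    μ * G.degree v ≤ Fintype.card V := by
  have hcompl : ((μ - 1) * G.degree v - 1) * f v = ∑ w ∈ Gᶜ.neighborFinset v, f w := by
    linear_combination -degree_mul_eq_sum_neighborFinset_of_normLap_mulVec_eq hf v -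
      G.sum_neighborFinset_add_add_sum_compl_neighborFinset f v - hsum
  have hdeg : (Gᶜ.degree v : ℝ) + G.degree v + 1 = Fintype.card V := by
    have := G.degree_lt_card_verts v
    rw [G.degree_compl]
    norm_cast
    omega
  have hbound : ((μ - 1) * G.degree v - 1) * |f v| ≤ Gᶜ.degree v * |f v| :=
    calc ((μ - 1) * G.degree v - 1) * |f v|
        ≤ |(μ - 1) * G.degree v - 1| * |f v| := by gcongr; exact le_abs_self _
      _ = |∑ w ∈ Gᶜ.neighborFinset v, f w| := by rw [← abs_mul, hcompl]
      _ ≤ ∑ w ∈ Gᶜ.neighborFinset v, |f w| := abs_sum_le_sum_abs _ _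
      _ ≤ Gᶜ.degree v * |f v| := by
        rw [← Gᶜ.card_neighborFinset_eq_degree, ← nsmul_eq_mul]
        exact sum_le_card_nsmul _ _ _ fun w _ => hmax w
  have := le_of_mul_le_mul_right hbound (abs_pos.mpr hv)
  linarith

lemma exists_eigenvalue_mul_degree_le_card {μ : ℝ} {f : V → ℝ} (hf0 : f ≠ 0)
    (hf : normLap G *ᵥ f = μ • f) (hsum : ∑ w, f w = 0) :
    ∃ v, μ * G.degree v ≤ Fintype.card V := by
  obtain ⟨w, hw⟩ := Function.ne_iff.mp hf0
  obtain ⟨v, -, hmax⟩ := exists_max_image univ (fun w => |f w|) ⟨w, mem_univ w⟩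
  have hv : f v ≠ 0 := fun h => hw (abs_nonpos_iff.mp (by simpa [h] using hmax w (mem_univ w)))
  exact ⟨v, eigenvalue_mul_degree_le_card_of_abs_le hf hsum hv fun w => hmax w (mem_univ w)⟩

end NormLap

def oneSidedEigenvector {V : Type*} [DecidableEq V] (V₂ : Finset V) (k d : ℕ) : V → ℝ :=
  fun v => if v ∈ V₂ then -(d : ℝ) else k

lemma oneSidedEigenvector_ne_zero {V : Type*} [DecidableEq V] {V₂ : Finset V} {k d : ℕ}
    (hd : d ≠ 0) (hV₂ : V₂.Nonempty) : oneSidedEigenvector V₂ k d ≠ 0 := by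
  obtain ⟨v, hv⟩ := hV₂
  refine Function.ne_iff.mpr ⟨v, ?_⟩
  simpa [oneSidedEigenvector, hv] using hd

lemma sum_neighborFinset_oneSidedEigenvector {V : Type*} [Fintype V] [DecidableEq V]
    (G : SimpleGraph V) [DecidableRel G.Adj] (V₂ : Finset V) (k d : ℕ) (v : V) :
    ∑ w ∈ G.neighborFinset v, oneSidedEigenvector V₂ k d w =
      k * G.degree v - (d + k) * (G.neighborFinset v ∩ V₂).card := by
  have hsplit : ∀ w, oneSidedEigenvector V₂ k d w = k - if w ∈ V₂ then (d + k : ℝ) else 0 := by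
    intro w
    unfold oneSidedEigenvector
    split_ifs <;> ring
  simp_rw [hsplit, sum_sub_distrib, sum_ite_mem, sum_const, G.card_neighborFinset_eq_degree,
    nsmul_eq_mul]
  ring

namespace IsOneSidedBipartite

variable {V : Type*} [Fintype V] [DecidableEq V] {G : SimpleGraph V} [DecidableRel G.Adj]
  {V₁ V₂ : Finset V} {k d : ℕ}

lemma mem_or_mem (hG : IsOneSidedBipartite G V₁ V₂ k d) (v : V) : v ∈ V₁ ∨ v ∈ V₂ :=
  mem_union.mp (hG.2.1 ▸ mem_univ v)

lemma degree_eq_of_mem_left (hG : IsOneSidedBipartite G V₁ V₂ k d) {v : V} (hv : v ∈ V₁) :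
    G.degree v = d :=
  hG.2.2.2.2.2 v hv

lemma sum_univ {M : Type*} [AddCommMonoid M] (hG : IsOneSidedBipartite G V₁ V₂ k d)
    (f : V → M) : ∑ v, f v = ∑ v ∈ V₁, f v + ∑ v ∈ V₂, f v := by
  rw [← sum_union hG.1, hG.2.1]

lemma card_add_card (hG : IsOneSidedBipartite G V₁ V₂ k d) :
    V₁.card + k = Fintype.card V := by
  rw [← hG.2.2.1, ← card_union_of_disjoint hG.1, hG.2.1, card_univ]

lemma neighborFinset_eq_of_mem_right (hG : IsOneSidedBipartite G V₁ V₂ k d) {v : V}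
    (hv : v ∈ V₂) : G.neighborFinset v = V₁ := by
  ext w
  rw [G.mem_neighborFinset]
  refine ⟨fun h => ?_, fun hw => (hG.2.2.2.1 w hw v hv).symm⟩
  exact (hG.mem_or_mem w).resolve_right fun hw => hG.2.2.2.2.1 v hv w hw h

lemma degree_eq_of_mem_right (hG : IsOneSidedBipartite G V₁ V₂ k d) {v : V} (hv : v ∈ V₂) :
    G.degree v = V₁.card := by
  rw [← G.card_neighborFinset_eq_degree, hG.neighborFinset_eq_of_mem_right hv]

lemma le_degree (hG : IsOneSidedBipartite G V₁ V₂ k d) (hd : d ≤ V₁.card) (v : V) :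
    d ≤ G.degree v := by
  rcases hG.mem_or_mem v with hv | hv
  · exact (hG.degree_eq_of_mem_left hv).ge
  · exact (hG.degree_eq_of_mem_right hv).ge.trans' hd

lemma sum_degree_mul (hG : IsOneSidedBipartite G V₁ V₂ k d) (f : V → ℝ) :
    ∑ v, G.degree v * f v = d * ∑ v ∈ V₁, f v + V₁.card * ∑ v ∈ V₂, f v := by
  rw [hG.sum_univ, mul_sum, mul_sum]
  congr 1
  · exact sum_congr rfl fun v hv => by rw [hG.degree_eq_of_mem_left hv]
  · exact sum_congr rfl fun v hv => by rw [hG.degree_eq_of_mem_right hv]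

lemma normLap_mulVec_oneSidedEigenvector (hG : IsOneSidedBipartite G V₁ V₂ k d) (hd : d ≠ 0)
    (hV₁ : V₁.Nonempty) :
    normLap G *ᵥ oneSidedEigenvector V₂ k d = ((d + k) / d : ℝ) • oneSidedEigenvector V₂ k d := by
  ext v
  rw [normLap_mulVec_apply, sum_neighborFinset_oneSidedEigenvector, Pi.smul_apply, smul_eq_mul]
  rcases hG.mem_or_mem v with hv | hv
  · have hv₂ : v ∉ V₂ := disjoint_left.mp hG.1 hv
    have hN : G.neighborFinset v ∩ V₂ = V₂ :=
      inter_eq_right.mpr fun w hw => (G.mem_neighborFinset v w).mpr (hG.2.2.2.1 v hv w hw)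
    rw [hG.degree_eq_of_mem_left hv, hN, hG.2.2.1]
    simp only [oneSidedEigenvector, if_neg hv₂]
    field_simp
    ring
  · rw [hG.degree_eq_of_mem_right hv, hG.neighborFinset_eq_of_mem_right hv,
      disjoint_iff_inter_eq_empty.mp hG.1, card_empty]
    simp only [oneSidedEigenvector, if_pos hv]
    have : (V₁.card : ℝ) ≠ 0 := by exact_mod_cast hV₁.card_pos.ne'
    field_simp
    ring

lemma eq_or_sum_eq_zero_of_normLap_mulVec_eq (hG : IsOneSidedBipartite G V₁ V₂ k d)
    (hd : d ≠ 0) (hV₁ : V₁.Nonempty) {μ : ℝ} {f : V → ℝ} (hμ : μ ≠ 0)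
    (hf : normLap G *ᵥ f = μ • f) :
    μ * d = d + k ∨ ∑ v, f v = 0 := by
  have hweighted : d * ∑ v ∈ V₁, f v + V₁.card * ∑ v ∈ V₂, f v = 0 := by
    rw [← hG.sum_degree_mul]
    exact sum_degree_mul_eq_zero_of_normLap_mulVec_eq hμ hf
  have hright : (1 - μ) * V₁.card * ∑ v ∈ V₂, f v = k * ∑ v ∈ V₁, f v := by
    rw [mul_sum, ← hG.2.2.1, ← nsmul_eq_mul, ← sum_const]
    refine sum_congr rfl fun v hv => ?_
    rw [← hG.degree_eq_of_mem_right hv, ← hG.neighborFinset_eq_of_mem_right hv]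
    exact degree_mul_eq_sum_neighborFinset_of_normLap_mulVec_eq hf v
  have hprod : (V₁.card : ℝ) * (∑ v ∈ V₂, f v) * (d + k - μ * d) = 0 := by
    linear_combination k * hweighted + d * hright
  rcases mul_eq_zero.mp hprod with h | h
  · rcases mul_eq_zero.mp h with h | h
    · exact absurd h (by exact_mod_cast hV₁.card_pos.ne')
    · right
      have h₁ : ∑ v ∈ V₁, f v = 0 := by
        simpa [h, hd] using hweighted
      rw [hG.sum_univ, h₁, h, add_zero]
  · left
    linarith

end IsOneSidedBipartite

theorem stmt11_general {V : Type*} [Fintype V] [DecidableEq V] (G : SimpleGraph V)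
    [DecidableRel G.Adj] (V₁ V₂ : Finset V) (n k d : ℕ)
    (hn : n = Fintype.card V) (hk : 0 < k)
    (hkd : k ≤ d) (hd : d < n - k)
    (hG : IsOneSidedBipartite G V₁ V₂ k d) (lam : ℝ)
    (hlam : IsGreatest
      {μ : ℝ | ∃ f : V → ℝ, f ≠ 0 ∧ (normLap G).mulVec f = μ • f} lam) :
    ((d : ℝ) + (k : ℝ)) / (d : ℝ) ≤ lam ∧ lam ≤ (n : ℝ) / (d : ℝ) := by
  have hd₀ : 0 < d := hk.trans_le hkd
  have hdV₁ : d ≤ V₁.card := by have := hG.card_add_card; omega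
  have hV₁ : V₁.Nonempty := card_pos.mp (hd₀.trans_le hdV₁)
  have hV₂ : V₂.Nonempty := card_pos.mp (hG.2.2.1 ▸ hk)
  have hlow : ((d : ℝ) + k) / d ≤ lam := hlam.2 ⟨_, oneSidedEigenvector_ne_zero hd₀.ne' hV₂,
    hG.normLap_mulVec_oneSidedEigenvector hd₀.ne' hV₁⟩
  have hlam₀ : 0 < lam := lt_of_lt_of_le (by positivity) hlow
  refine ⟨hlow, (le_div_iff₀ (by positivity)).mpr ?_⟩
  obtain ⟨f, hf₀, hf⟩ := hlam.1
  rcases hG.eq_or_sum_eq_zero_of_normLap_mulVec_eq hd₀.ne' hV₁ hlam₀.ne' hf with h | hsum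
  · rw [h]
    exact_mod_cast (by omega : d + k ≤ n)
  · obtain ⟨v, hv⟩ := exists_eigenvalue_mul_degree_le_card hf₀ hf hsum
    calc lam * d ≤ lam * G.degree v := by gcongr; exact hG.le_degree hdV₁ v
      _ ≤ n := hn ▸ hv

theorem stmt11 {V : Type*} [Fintype V] [DecidableEq V] (G : SimpleGraph V)
    [DecidableRel G.Adj] (V₁ V₂ : Finset V) (n k d : ℕ)
    (hn : n = Fintype.card V) (hk : 0 < k) (hk2 : k ≤ n - 2)
    (hkd : k ≤ d) (hdn : d ≤ n - 1) (hd : d < n - k)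
    (hG : IsOneSidedBipartite G V₁ V₂ k d) (lam : ℝ)
    (hlam : IsGreatest
      {μ : ℝ | ∃ f : V → ℝ, f ≠ 0 ∧ (normLap G).mulVec f = μ • f} lam) :
    ((d : ℝ) + (k : ℝ)) / (d : ℝ) ≤ lam ∧ lam ≤ (n : ℝ) / (d : ℝ) :=
  stmt11_general G V₁ V₂ n k d hn hk hkd hd hG lam hlam
end
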